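/- Let w be a word of length n over a finite ordered alphabet Σ, let 1 ≤ i ≤ n+1, and let C be a cycle of σ_i (the standard permutation of dol(w,i)) with i ∉ [min C, max C] (a bad cycle with respect to i). Then: if i < min C, no position j ≤ i is nice for w; and if i > max C, no position j ≥ i is nice for w. -/

import Mathlib

/-!
If `j` is nice, `dol w j = BWT(v$)`. All rotations of `v$` are distinct, so the standard
permutation of a BWT is the LF-mapping, which sends the rank of a rotation to the rank of its
right rotation; it is conjugate to the cyclic shift of `ℤ/(n+1)`, hence a single cycle.
Moving `$` from position `i` to position `j` changes the standard permutation only between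
`i` and `j`, so a bad cycle `C` of `σ_i` on the far side of `i` is also invariant under `σ_j`.
Then `C` is everything, which is absurd since `C` misses position `1` (resp. `n+1`).
-/

namespace DollarBWT

/-- The list of all rotations of a word. -/
def rotations {α : Type*} (v : List α) : List (List α) :=
  (List.range v.length).map fun k => v.rotate k

/-- The Burrows–Wheeler transform of a word `v`: sort (stably) the multiset of all
rotations of `v` lexicographically and take the last character of each rotation. -/
def bwt {α : Type*} [LinearOrder α] (v : List α) : List α :=
  ((rotations v).insertionSort (· ≤ ·)).filterMap List.getLast?

/-- `dol w i` inserts the sentinel `⊥` (playing the role of `$`, smaller than every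
letter of the alphabet) at (1-based) position `i` of the word `w`. -/
def dol {α : Type*} [LinearOrder α] (w : List α) (i : ℕ) : List (WithBot α) :=
  (w.map (fun a => (a : WithBot α))).insertIdx (i - 1) ⊥

/-- Position `i` (1-based, `1 ≤ i ≤ |w|+1`) is *nice* for `w` if there is a word `v`
of the same length as `w` with `BWT(v$) = dol(w,i)`. -/
def Nice {α : Type*} [LinearOrder α] (w : List α) (i : ℕ) : Prop :=
  ∃ v : List α, v.length = w.length ∧
    bwt (v.map (fun a => (a : WithBot α)) ++ [(⊥ : WithBot α)]) = dol w i

/-- `σ` (a permutation of `Fin n`, thought of as the positions `1,…,n` of `w`) is the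
standard permutation of the word `w`. -/
def IsStdPerm {α : Type*} [LinearOrder α] {n : ℕ} (w : List α)
    (σ : Equiv.Perm (Fin n)) : Prop :=
  ∃ h : w.length = n, ∀ i j : Fin n,
    σ i < σ j ↔ (w.get (Fin.cast h.symm i) < w.get (Fin.cast h.symm j)
      ∨ (w.get (Fin.cast h.symm i) = w.get (Fin.cast h.symm j) ∧ i < j))

/-- Application of a permutation of `Fin n` in 1-based terms: `ap σ k` is the image of
`k ∈ {1,…,n}` under `σ` read as a permutation of `{1,…,n}` (junk: `k` outside). -/
def ap {n : ℕ} (σ : Equiv.Perm (Fin n)) (k : ℕ) : ℕ :=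
  if h : 1 ≤ k ∧ k ≤ n then ((σ ⟨k - 1, by omega⟩ : Fin n) : ℕ) + 1 else k

/-- `C` is a cycle of the permutation `σ`: a minimal non-empty subset with `σ(C) = C`. -/
def IsCycleOf {β : Type*} (σ : Equiv.Perm β) (C : Set β) : Prop :=
  C.Nonempty ∧ σ '' C = C ∧ ∀ D : Set β, D.Nonempty → D ⊆ C → σ '' D = D → D = C

/-- The number of cycles in the cycle decomposition of `σ` (fixpoints count as cycles). -/
noncomputable def numCycles {β : Type*} (σ : Equiv.Perm β) : ℕ :=
  {C : Set β | IsCycleOf σ C}.ncard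

/-- A permutation is cyclic if its cycle decomposition consists of a single cycle,
i.e. the whole domain is one cycle. -/
def PermCyclic {β : Type*} (σ : Equiv.Perm β) : Prop :=
  IsCycleOf σ (Set.univ : Set β)

/-- `C ⊆ {1,…,n}` (in 1-based terms) is a cycle of `σ`. -/
def IsCycleSet1 {n : ℕ} (σ : Equiv.Perm (Fin n)) (C : Set ℕ) : Prop :=
  ∃ C' : Set (Fin n), IsCycleOf σ C' ∧ C = (fun x : Fin n => (x : ℕ) + 1) '' C'

/-- A word is primitive if it is not a proper power. -/
def Primitive {α : Type*} (v : List α) : Prop :=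
  ∀ (u : List α) (k : ℕ), v = (List.replicate k u).flatten → k = 1

/-- `σ` equals the product of the cycles given (in 1-based terms) by the lists in `Ls`:
the lists are disjoint, consist of elements of `{1,…,n}`, `σ` maps each entry of each
list to the (cyclically) next one, and fixes everything else. -/
def IsCyclesProd {n : ℕ} (σ : Equiv.Perm (Fin n)) (Ls : List (List ℕ)) : Prop :=
  Ls.flatten.Nodup ∧ (∀ L ∈ Ls, L ≠ []) ∧ (∀ x ∈ Ls.flatten, 1 ≤ x ∧ x ≤ n) ∧
  (∀ L ∈ Ls, ∀ (t : ℕ) (ht : t < L.length),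
      ap σ (L.get ⟨t, ht⟩) = L.get ⟨(t + 1) % L.length, Nat.mod_lt _ (by omega)⟩) ∧
  (∀ x : ℕ, 1 ≤ x → x ≤ n → x ∉ Ls.flatten → ap σ x = x)

/-- `S ⊆ {1,…,n}` (1-based) is a pseudo-cycle of `σ` witnessed by the partition
`S = Sl ∪ Sr` with `Sl < Sr` and `σ(S) = (Sl − 1) ∪ Sr`. -/
def IsPseudoCycleWith {n : ℕ} (σ : Equiv.Perm (Fin n)) (S Sl Sr : Set ℕ) : Prop :=
  S.Nonempty ∧ S ⊆ Set.Icc 1 n ∧ Sl ∪ Sr = S ∧ Disjoint Sl Sr ∧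
    (∀ x ∈ Sl, ∀ y ∈ Sr, x < y) ∧
    ap σ '' S = ((fun x => x - 1) '' Sl) ∪ Sr

/-- The critical interval `[a+1, b]` of a pseudo-cycle with partition `Sl, Sr`,
where `a = max Sl` (`0` if `Sl = ∅`) and `b = min Sr` (`n+1` if `Sr = ∅`). -/
noncomputable def criticalInterval (n : ℕ) (Sl Sr : Set ℕ) : Set ℕ :=
  Set.Icc (sSup Sl + 1) (sInf (insert (n + 1) Sr))

/-- `unshift(U, i) = { x ∈ U : x < i } ∪ { x − 1 : x ∈ U, x > i }`. -/
def unshift (U : Set ℕ) (i : ℕ) : Set ℕ :=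
  {x | x ∈ U ∧ x < i} ∪ (fun x => x - 1) '' {x | x ∈ U ∧ i < x}

/-- The number of nice positions of `w`. -/
noncomputable def niceCount {α : Type*} [LinearOrder α] (w : List α) : ℕ :=
  {i : ℕ | 1 ≤ i ∧ i ≤ w.length + 1 ∧ Nice w i}.ncard

/-- `L`, the maximum over all cycles `C` of `σ` of the (1-based) minimum of `C`. -/
noncomputable def Lval {n : ℕ} (σ : Equiv.Perm (Fin n)) : ℕ :=
  sSup ((fun C : Set (Fin n) => sInf ((fun x : Fin n => (x : ℕ) + 1) '' C)) ''
    {C | IsCycleOf σ C})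

/-- The number of bad pairs of `σ`: cycles `C` which are not the cycle with the largest
minimum and such that `min C + 1 ∈ C` (all in 1-based terms). -/
noncomputable def badPairCount {n : ℕ} (σ : Equiv.Perm (Fin n)) : ℕ :=
  {C : Set (Fin n) | IsCycleOf σ C ∧
    sInf ((fun x : Fin n => (x : ℕ) + 1) '' C) < Lval σ ∧
    sInf ((fun x : Fin n => (x : ℕ) + 1) '' C) + 1 ∈
      (fun x : Fin n => (x : ℕ) + 1) '' C}.ncard

open Equiv Finset

section StdPerm

variable {β : Type*} [LinearOrder β] {n : ℕ}

theorem val_eq_card_lt (σ : Perm (Fin n)) (p : Fin n) : (σ p : ℕ) = #{q | σ q < σ p} := by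
  rw [← Fin.card_Iio]
  exact (Finset.card_equiv σ fun q => by simp).symm

theorem IsStdPerm.apply_eq_of_reindex {s t : List β} {σ τ : Perm (Fin n)}
    (hσ : IsStdPerm s σ) (hτ : IsStdPerm t τ) (ν : Perm (Fin n))
    (hst : ∀ q : Fin n, t[(ν q : ℕ)]? = s[(q : ℕ)]?) {p : Fin n} (hνp : ν p = p)
    (hν : ∀ q, ν q < p ↔ q < p) : σ p = τ p := by
  obtain ⟨hs, hσ⟩ := hσ
  obtain ⟨ht, hτ⟩ := hτ
  have hget : ∀ q, t.get (Fin.cast ht.symm (ν q)) = s.get (Fin.cast hs.symm q) := fun q => by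
    simpa [List.getElem?_eq_getElem, hs, ht] using hst q
  have hgetp : t.get (Fin.cast ht.symm p) = s.get (Fin.cast hs.symm p) := by
    simpa [hνp] using hget p
  apply Fin.ext
  rw [val_eq_card_lt σ, val_eq_card_lt τ]
  refine Finset.card_equiv ν fun q => ?_
  simp only [Finset.mem_filter, Finset.mem_univ, true_and, hσ, hτ, hget, hgetp, hν]

theorem val_cycleIcc {i j : Fin n} (q : Fin n) :
    (Fin.cycleIcc i j q : ℕ) =
      if (q : ℕ) < i ∨ (j : ℕ) < q then (q : ℕ)
      else if (q : ℕ) = j then (i : ℕ) else (q : ℕ) + 1 := by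
  obtain ⟨m, rfl⟩ : ∃ m, n = m + 1 := ⟨n - 1, by have := q.pos; omega⟩
  rcases lt_or_ge q i with hqi | hiq
  · simp [Fin.cycleIcc_of_lt hqi, hqi]
  rcases lt_or_ge j q with hjq | hqj
  · simp [Fin.cycleIcc_of_gt hjq, hjq]
  rw [Fin.cycleIcc_of_le_of_le hiq hqj]
  have : ¬ ((q : ℕ) < i ∨ (j : ℕ) < q) := by simp only [not_or, not_lt]; exact ⟨hiq, hqj⟩
  simp only [if_neg this, Fin.val_inj]
  split_ifs with h
  · rfl
  · exact Fin.val_add_one_of_lt ((lt_of_le_of_ne hqj h).trans_le (Fin.le_last j))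

/-- Moving the inserted letter from index `k` to `k'` reindexes the word by the cycle
`(k k+1 … k')`, which fixes every position outside `[k, k']`. -/
theorem IsStdPerm.apply_eq_of_insertIdx (l : List β) (x : β) {k k' : ℕ} (hkk' : k ≤ k')
    (hk' : k' ≤ l.length) {σ τ : Perm (Fin n)} (hσ : IsStdPerm (l.insertIdx k x) σ)
    (hτ : IsStdPerm (l.insertIdx k' x) τ) {p : Fin n} (hp : (p : ℕ) < k ∨ k' < (p : ℕ)) :
    σ p = τ p := by
  have hn : n = l.length + 1 := by
    rw [← hσ.1, List.length_insertIdx_of_le_length (hkk'.trans hk')]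
  set ν := Fin.cycleIcc (⟨k, by omega⟩ : Fin n) ⟨k', by omega⟩
  have hval : ∀ q : Fin n, (ν q : ℕ) =
      if (q : ℕ) < k ∨ k' < q then (q : ℕ) else if (q : ℕ) = k' then k else q + 1 :=
    val_cycleIcc
  refine (hτ.apply_eq_of_reindex hσ ν (fun q => ?_) (Fin.ext ?_) (fun q => ?_)).symm
  · rw [hval q, List.getElem?_insertIdx, List.getElem?_insertIdx]
    split_ifs <;> first | rfl | (congr 1; omega)
  · rw [hval p, if_pos hp]
  · rw [Fin.lt_def, Fin.lt_def, hval q]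
    split_ifs <;> omega

end StdPerm

section PermCyclic

theorem PermCyclic.permCongr {γ δ : Type*} {π : Perm γ} (h : PermCyclic π) (e : γ ≃ δ) :
    PermCyclic (e.permCongr π) := by
  refine ⟨h.1.image e |>.mono (Set.subset_univ _),
    Set.image_univ_of_surjective (Equiv.surjective _), fun D hD _ hπD => ?_⟩
  have : π '' (e.symm '' D) = e.symm '' D := by
    conv_rhs => rw [← hπD]
    rw [Set.image_image, Set.image_image]
    simp [Equiv.permCongr_apply]
  have := h.2.2 _ (hD.image _) (Set.subset_univ _) this
  simpa using congrArg (e '' ·) this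

open Fin.NatCast in
theorem permCyclic_subRight_one (m : ℕ) : PermCyclic (Equiv.subRight (1 : Fin (m + 1))) := by
  refine ⟨Set.univ_nonempty, Set.image_univ_of_surjective (Equiv.surjective _),
    fun D ⟨x, hx⟩ _ hD => Set.eq_univ_of_forall fun y => ?_⟩
  have hmem : ∀ k : ℕ, x - (k : Fin (m + 1)) ∈ D := fun k => by
    induction k with
    | zero => simpa using hx
    | succ k ih =>
      rw [← hD]
      exact ⟨_, ih, by simp [sub_sub]⟩
  simpa using hmem (x - y : Fin (m + 1))

theorem IsCycleOf.eq_univ_of_eqOn {γ : Type*} {σ ρ : Perm γ} {C : Set γ} (hC : IsCycleOf σ C)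
    (hρ : PermCyclic ρ) (h : Set.EqOn ρ σ C) : C = Set.univ :=
  hρ.2.2 C hC.1 (Set.subset_univ C) ((Set.image_congr h).trans hC.2.1)

end PermCyclic

section Rotations

variable {γ : Type*}

theorem nodup_rotations_append_singleton {v : List γ} {c : γ} (hc : c ∉ v) :
    (rotations (v ++ [c])).Nodup := by
  classical
  have hidx : ∀ k ≤ v.length, ((v ++ [c]).rotate k).idxOf c = v.length - k := fun k hk => by
    rw [List.rotate_eq_drop_append_take (by simp; omega), List.drop_append_of_le_length hk,
      List.take_append_of_le_length hk, List.append_assoc, List.singleton_append,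
      List.idxOf_append_of_notMem (fun h => hc (List.mem_of_mem_drop h)), List.idxOf_cons_self,
      List.length_drop]
    rfl
  refine List.Nodup.map_on (fun x hx y hy hxy => ?_) List.nodup_range
  simp only [List.mem_range, List.length_append, List.length_singleton] at hx hy
  have := congrArg (List.idxOf c) hxy
  rw [hidx x (by omega), hidx y (by omega)] at this
  omega

theorem rotate_rotate_val_sub_one {u : List γ} {m : ℕ} (hu : u.length = m + 1)
    (t : Fin (m + 1)) : (u.rotate (t - 1 : Fin (m + 1))).rotate 1 = u.rotate t := by
  rw [List.rotate_rotate, ← List.rotate_mod, hu]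
  conv_rhs => rw [← sub_add_cancel t 1, Fin.val_add, Fin.val_one', Nat.add_mod_mod]

end Rotations

section BWT

variable {β : Type*} [LinearOrder β]

theorem append_singleton_lt_append_singleton {X Y : List β} (c : β)
    (h : X.length = Y.length) : X ++ [c] < Y ++ [c] ↔ X < Y := by
  induction X generalizing Y with
  | nil => cases Y <;> simp_all
  | cons a X ih =>
    cases Y with
    | nil => simp at h
    | cons b Y => simp [List.cons_lt_cons_iff, ih (Nat.succ_inj.1 h)]

/-- The LF-mapping: comparing the right rotations `b_k :: Y` compares the last letters `b_k`
first and then the words `Y ++ [b_k]` themselves. -/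
theorem isStdPerm_of_cons_append {m L : ℕ} {b : List β} (hb : b.length = m)
    {S : Fin m → List β} (hS : StrictMono S) (hSlen : ∀ k, (S k).length = L)
    {ρ : Perm (Fin m)} (hρ : ∀ k, ∃ Y, S (ρ k) = b.get (Fin.cast hb.symm k) :: Y ∧
      S k = Y ++ [b.get (Fin.cast hb.symm k)]) :
    IsStdPerm b ρ := by
  refine ⟨hb, fun p q => ?_⟩
  obtain ⟨Yp, hρp, hp⟩ := hρ p
  obtain ⟨Yq, hρq, hq⟩ := hρ q
  have hY : Yp.length = Yq.length := by
    have := hSlen p ▸ hSlen q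
    simpa [hp, hq] using this.symm
  rw [← hS.lt_iff_lt, hρp, hρq, List.cons_lt_cons_iff, ← hS.lt_iff_lt (a := p), hp, hq]
  exact or_congr_right (and_congr_right fun h => by
    rw [h, append_singleton_lt_append_singleton _ hY])

theorem bwt_eq_map (u : List β) (d : β) :
    bwt u = ((rotations u).insertionSort (· ≤ ·)).map (·.getLastD d) := by
  refine List.filterMap_eq_map_iff_forall_eq_some.2 fun z hz => ?_
  obtain ⟨t, ht, rfl⟩ := List.mem_map.1 ((List.mem_insertionSort _).1 hz)
  have : u.rotate t ≠ [] := by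
    rw [Ne, ← List.length_eq_zero_iff, List.length_rotate]
    simp at ht
    omega
  simp [List.getLast?_eq_some_getLast this]

/-- If the `k`-th smallest rotation is `u.rotate (e k)`, the LF-mapping is
`e⁻¹ ∘ (· - 1) ∘ e`, a conjugate of the cyclic shift. -/
theorem exists_isStdPerm_bwt_permCyclic {u : List β} {m : ℕ} (hu : u.length = m + 1)
    (hnd : (rotations u).Nodup) :
    ∃ ρ : Perm (Fin (m + 1)), IsStdPerm (bwt u) ρ ∧ PermCyclic ρ := by
  set sorted := (rotations u).insertionSort (· ≤ ·)
  have hperm : sorted.Perm (rotations u) := List.perm_insertionSort _ _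
  have hlen : sorted.length = m + 1 := by rw [hperm.length_eq]; simp [rotations, hu]
  set S : Fin (m + 1) → List β := fun k => sorted.get (Fin.cast hlen.symm k)
  have hS : StrictMono S :=
    (List.sortedLE_insertionSort.sortedLT_of_nodup (hperm.nodup_iff.2 hnd)).strictMono_get.comp
      (Fin.cast_strictMono _)
  have hrot : ∀ k, ∃ t : Fin (m + 1), S k = u.rotate t := fun k => by
    obtain ⟨t, ht, h⟩ := List.mem_map.1 (hperm.subset (List.get_mem _ _))
    exact ⟨⟨t, by simpa [hu] using ht⟩, h.symm⟩
  choose r hr using hrot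
  set e := Equiv.ofBijective r
    (Finite.injective_iff_bijective.1 fun k l h => hS.injective (by rw [hr, hr, h]))
  have hblen : (bwt u).length = m + 1 := by
    rw [bwt_eq_map u (u.head (List.ne_nil_of_length_eq_add_one hu)), List.length_map, hlen]
  refine ⟨e.symm.permCongr (Equiv.subRight 1), isStdPerm_of_cons_append (L := m + 1) hblen hS
    (fun k => by simp [hr, hu]) fun k => ?_, (permCyclic_subRight_one m).permCongr _⟩
  have hρk : S (e.symm.permCongr (Equiv.subRight 1) k) = u.rotate (r k - 1 : Fin (m + 1)) := by
    rw [hr]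
    exact congrArg (fun t : Fin (m + 1) => u.rotate t) (e.apply_symm_apply _)
  obtain ⟨a, Y, hy⟩ : ∃ a Y, u.rotate (r k - 1 : Fin (m + 1)) = a :: Y :=
    List.exists_cons_of_ne_nil
      (List.ne_nil_of_length_eq_add_one ((List.length_rotate _ _).trans hu))
  have hSk : S k = Y ++ [a] := by
    rw [hr k, ← rotate_rotate_val_sub_one hu, hy]
    simp
  have hbk : (bwt u).get (Fin.cast hblen.symm k) = a := by
    have : (bwt u).get (Fin.cast hblen.symm k) = (S k).getLastD a := by
      simp only [bwt_eq_map u a, List.get_eq_getElem, List.getElem_map, S]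
      rfl
    rw [this, hSk, List.getLastD_concat]
  exact ⟨Y, by rw [hbk, hρk, hy], by rw [hbk, hSk]⟩

end BWT

section Nice

variable {α : Type*} [LinearOrder α]

theorem dol_eq_insertIdx (w : List α) (i : ℕ) :
    dol w i = (w.map WithBot.some).insertIdx (i - 1) ⊥ := by
  simp [dol, List.map_eq_flatMap]

theorem Nice.exists_isStdPerm_permCyclic {w : List α} {j : ℕ} (h : Nice w j) :
    ∃ ρ : Perm (Fin (w.length + 1)), IsStdPerm (dol w j) ρ ∧ PermCyclic ρ := by
  obtain ⟨v, hv, hbwt⟩ := h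
  rw [← hbwt]
  exact exists_isStdPerm_bwt_permCyclic (by simp [hv])
    (nodup_rotations_append_singleton (by simp))

theorem le_length_add_one_of_isStdPerm_dol {w : List α} {j : ℕ}
    {ρ : Perm (Fin (w.length + 1))} (h : IsStdPerm (dol w j) ρ) : j ≤ w.length + 1 := by
  have := h.1
  rw [dol_eq_insertIdx, List.length_insertIdx, List.length_map] at this
  split_ifs at this <;> omega

theorem IsStdPerm.dol_apply_eq {w : List α} {a b n : ℕ} (hab : a ≤ b) (h1b : 1 ≤ b)
    (hb : b ≤ w.length + 1) {σ τ : Perm (Fin n)} (hσ : IsStdPerm (dol w a) σ)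
    (hτ : IsStdPerm (dol w b) τ) {p : Fin n} (hp : (p : ℕ) + 1 < a ∨ b < (p : ℕ) + 1) :
    σ p = τ p :=
  IsStdPerm.apply_eq_of_insertIdx (w.map WithBot.some) ⊥ (Nat.sub_le_sub_right hab 1)
    (by simp; omega) (dol_eq_insertIdx w a ▸ hσ) (dol_eq_insertIdx w b ▸ hτ) (by omega)

end Nice

theorem statement_18_general {α : Type*} [LinearOrder α] (w : List α) (i : ℕ)
    (h1 : 1 ≤ i) (h2 : i ≤ w.length + 1)
    (σi : Equiv.Perm (Fin (w.length + 1))) (hσi : IsStdPerm (dol w i) σi)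
    (C : Set (Fin (w.length + 1))) (hC : IsCycleOf σi C) :
    ((∀ x ∈ C, i < (x : ℕ) + 1) → ∀ j : ℕ, j ≤ i → ¬ Nice w j) ∧
    ((∀ x ∈ C, (x : ℕ) + 1 < i) → ∀ j : ℕ, i ≤ j → ¬ Nice w j) := by
  refine ⟨fun hCgt j hji hj => ?_, fun hClt j hij hj => ?_⟩
  · obtain ⟨ρ, hρ, hρcyc⟩ := hj.exists_isStdPerm_permCyclic
    have hCuniv := hC.eq_univ_of_eqOn hρcyc fun p hp =>
      hρ.dol_apply_eq hji h1 h2 hσi (Or.inr (hCgt p hp))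
    have := hCgt 0 (hCuniv ▸ Set.mem_univ _)
    rw [Fin.val_zero] at this
    omega
  · obtain ⟨ρ, hρ, hρcyc⟩ := hj.exists_isStdPerm_permCyclic
    have hCuniv := hC.eq_univ_of_eqOn hρcyc fun p hp =>
      (hσi.dol_apply_eq hij (h1.trans hij) (le_length_add_one_of_isStdPerm_dol hρ) hρ
        (Or.inl (hClt p hp))).symm
    have := hClt (Fin.last _) (hCuniv ▸ Set.mem_univ _)
    rw [Fin.val_last] at this
    omega

/-- Let `C` be a cycle of `σ_i` (1-based elements `x+1` for `x ∈ C`).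
If `i < min C` then no position `j ≤ i` is nice for `w`, and if `i > max C` then no
position `j ≥ i` is nice for `w`. -/
theorem statement_18 {α : Type*} [LinearOrder α] [Fintype α] (w : List α) (i : ℕ)
    (h1 : 1 ≤ i) (h2 : i ≤ w.length + 1)
    (σi : Equiv.Perm (Fin (w.length + 1))) (hσi : IsStdPerm (dol w i) σi)
    (C : Set (Fin (w.length + 1))) (hC : IsCycleOf σi C) :
    ((∀ x ∈ C, i < (x : ℕ) + 1) → ∀ j : ℕ, j ≤ i → ¬ Nice w j) ∧
    ((∀ x ∈ C, (x : ℕ) + 1 < i) → ∀ j : ℕ, i ≤ j → ¬ Nice w j) :=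
  statement_18_general w i h1 h2 σi hσi C hC

end DollarBWT
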